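/- arXiv:2404.04477 — 2 statements merged into one kernel-verified Lean document; each statement's English description precedes it below -/
import Mathlib

section
/- Let $a > b > 0$, $c_1 \ge 1$, $c_2 > 0$, and let $\delta > 0$ be the unique positive solution of $\frac{a c_1 \delta}{1+a\delta} + \frac{b c_2 \delta}{1+b\delta} = 1$. If $\alpha > 0$ also satisfies $\frac{a c_1 \alpha}{1+a\alpha} + \frac{b c_2 \alpha}{1+b\alpha} = 1$, then $\alpha = \delta$. More generally, for any $\alpha, \delta > 0$ with these fixed-point values, the contraction coefficient $C_{a,b} = \frac{\frac{a^2 c_1 \delta}{(1+a\delta)(1+a\alpha)} + \frac{b^2 c_2 \delta}{(1+b\delta)(1+b\alpha)}}{\frac{a c_1}{1+a\alpha} + \frac{b c_2}{1+b\alpha}}$ satisfies $C_{a,b} < 1$. -/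
/-!
Each summand `p * k * x / (1 + p * x)` with `p, k > 0` is strictly increasing on `[0, ∞)`, so the
fixed-point equation has at most one nonnegative solution, and `α = δ`. The contraction
coefficient then compares `p * k / (1 + p * x)` with its multiple by `p * x / (1 + p * x) < 1`,
term by term.
-/

open Set

lemma strictMonoOn_mul_mul_div_one_add_mul {p k : ℝ} (hp : 0 < p) (hk : 0 < k) :
    StrictMonoOn (fun x => p * k * x / (1 + p * x)) (Ici 0) := by
  intro x hx y hy hxy
  have hx' : (0 : ℝ) ≤ x := hx
  have hy' : (0 : ℝ) ≤ y := hy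
  rw [div_lt_div_iff₀ (by positivity) (by positivity)]
  nlinarith [mul_pos (mul_pos hp hk) (sub_pos.2 hxy)]

lemma sq_mul_mul_div_lt_mul_div {p k x : ℝ} (hp : 0 < p) (hk : 0 < k) (hx : 0 ≤ x) :
    p ^ 2 * k * x / ((1 + p * x) * (1 + p * x)) < p * k / (1 + p * x) := by
  have hpx : 0 < 1 + p * x := by positivity
  have hfrac : p * x / (1 + p * x) < 1 := (div_lt_one hpx).2 (by linarith)
  calc p ^ 2 * k * x / ((1 + p * x) * (1 + p * x))
      = p * k / (1 + p * x) * (p * x / (1 + p * x)) := by field_simp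
    _ < p * k / (1 + p * x) := mul_lt_of_lt_one_right (by positivity) hfrac

theorem jacobi_fixed_point_unique_and_contraction (a b c1 c2 α δ : ℝ)
    (hab : b < a) (hb : 0 < b) (hc1 : 1 ≤ c1) (hc2 : 0 < c2)
    (hδ : 0 < δ) (hα : 0 < α)
    (hδeq : a*c1*δ/(1+a*δ) + b*c2*δ/(1+b*δ) = 1)
    (hαeq : a*c1*α/(1+a*α) + b*c2*α/(1+b*α) = 1) :
    α = δ ∧
    (a^2*c1*δ/((1+a*δ)*(1+a*α)) + b^2*c2*δ/((1+b*δ)*(1+b*α))) /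
      (a*c1/(1+a*α) + b*c2/(1+b*α)) < 1 := by
  have ha : 0 < a := hb.trans hab
  have hc1' : 0 < c1 := by linarith
  have hmono : StrictMonoOn (fun x => a*c1*x/(1+a*x) + b*c2*x/(1+b*x)) (Ici 0) :=
    (strictMonoOn_mul_mul_div_one_add_mul ha hc1').add
      (strictMonoOn_mul_mul_div_one_add_mul hb hc2)
  obtain rfl : α = δ := hmono.injOn hα.le hδ.le (hαeq.trans hδeq.symm)
  refine ⟨rfl, (div_lt_one (by positivity)).2 (add_lt_add ?_ ?_)⟩
  · exact sq_mul_mul_div_lt_mul_div ha hc1' hα.le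
  · exact sq_mul_mul_div_lt_mul_div hb hc2 hα.le
end

section
/- Fix $c \in (0,1)$ and let $\delta_0(\overline\sigma^2)$ be the positive root of $\overline\sigma^2 x^2 + (1-c+\overline\sigma^2)x - c = 0$. Then as $\overline\sigma^2 \to 0^+$: (i) $\delta_0(\overline\sigma^2) \to \frac{c}{1-c}$; (ii) $\overline\sigma^4 \delta_0'(\overline\sigma^2) \to 0$; and hence the high-SNR dispersion limits $\Xi_- \to -\beta\log(1-c) + c$ and $\Xi_+ \to -\beta\log(1-c) + c(2-c)$ hold, where $\Xi_- = \beta V_1 + V_2$ and $\Xi_+ = \beta V_1 + V_2 + V_3$ with $V_1 \to -\log(1-c)$, $V_2 \to c$ and $V_3 \to c - c^2$, so that $V_2 + V_3 \to c(2-c)$. -/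
open Filter Set

/-- The Marchenko–Pastur fixed point `δ₀(σ̄²)`, the positive root of
`σ̄² x² + (1-c+σ̄²) x - c = 0`. -/
noncomputable def mpFixedPoint (c : ℝ) (s : ℝ) : ℝ :=
  (-(1 - c + s) + Real.sqrt ((1 - c + s)^2 + 4*c*s)) / (2*s)

lemma mp_alt (c : ℝ) (hc0 : 0 < c) (hc1 : c < 1) {s : ℝ} (hs : 0 < s) :
    mpFixedPoint c s = 2*c / (Real.sqrt ((1 - c + s)^2 + 4*c*s) + (1 - c + s)) := by
  have hA : 0 < 1 - c + s := by linarith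
  have hD : 0 < (1 - c + s)^2 + 4*c*s := by positivity
  have hq : 0 < Real.sqrt ((1 - c + s)^2 + 4*c*s) := Real.sqrt_pos.mpr hD
  have hq2 : (Real.sqrt ((1 - c + s)^2 + 4*c*s))^2 = (1 - c + s)^2 + 4*c*s :=
    Real.sq_sqrt hD.le
  rw [mpFixedPoint]
  have hden : Real.sqrt ((1 - c + s)^2 + 4*c*s) + (1 - c + s) ≠ 0 := by positivity
  field_simp
  linear_combination Real.sq_sqrt (by positivity : (0:ℝ) ≤ (1 - c + s) ^ 2 + c * s * 4)

lemma mp_hasDeriv (c : ℝ) (hc0 : 0 < c) (hc1 : c < 1) {s : ℝ} (hs : 0 < s) :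
    HasDerivAt (mpFixedPoint c)
      (-(mpFixedPoint c s^2 + mpFixedPoint c s) / Real.sqrt ((1 - c + s)^2 + 4*c*s)) s := by
  have hA : 0 < 1 - c + s := by linarith
  have hD : 0 < (1 - c + s)^2 + 4*c*s := by positivity
  have hq : 0 < Real.sqrt ((1 - c + s)^2 + 4*c*s) := Real.sqrt_pos.mpr hD
  have hq2 : (Real.sqrt ((1 - c + s)^2 + 4*c*s))^2 = (1 - c + s)^2 + 4*c*s :=
    Real.sq_sqrt hD.le
  have h1 : HasDerivAt (fun t : ℝ => 1 - c + t) 1 s := (hasDerivAt_id s).const_add (1 - c)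
  have h2 : HasDerivAt (fun t : ℝ => (1 - c + t)^2 + 4*c*t) (2*(1 - c + s) + 4*c) s := by
    have := (h1.pow 2).add ((hasDerivAt_id s).const_mul (4*c))
    refine this.congr_deriv ?_
    push_cast
    ring
  have h3 : HasDerivAt (fun t : ℝ => Real.sqrt ((1 - c + t)^2 + 4*c*t))
      (1 / (2 * Real.sqrt ((1 - c + s)^2 + 4*c*s)) * (2*(1 - c + s) + 4*c)) s :=
    (Real.hasDerivAt_sqrt hD.ne').comp s h2
  have h4 : HasDerivAt (fun t : ℝ => -(1 - c + t) + Real.sqrt ((1 - c + t)^2 + 4*c*t))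
      (-1 + 1 / (2 * Real.sqrt ((1 - c + s)^2 + 4*c*s)) * (2*(1 - c + s) + 4*c)) s :=
    h1.neg.add h3
  have h5 : HasDerivAt (fun t : ℝ => 2*t) 2 s := by
    simpa using (hasDerivAt_id s).const_mul (2:ℝ)
  have hdiv := h4.div h5 (by positivity : (2:ℝ)*s ≠ 0)
  have hfun : mpFixedPoint c = fun t : ℝ =>
      (-(1 - c + t) + Real.sqrt ((1 - c + t)^2 + 4*c*t)) / (2*t) := rfl
  rw [hfun]
  refine hdiv.congr_deriv ?_
  simp only [mpFixedPoint]
  set q := Real.sqrt ((1 - c + s)^2 + 4*c*s) with hqdef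
  field_simp
  linear_combination (-1) * hq2

theorem high_snr_dispersion_limits (c β : ℝ) (hc0 : 0 < c) (hc1 : c < 1) (hβ : 0 < β) :
    Filter.Tendsto (mpFixedPoint c) (nhdsWithin 0 (Set.Ioi 0)) (nhds (c/(1-c))) ∧
    Filter.Tendsto (fun s => s^2 * deriv (mpFixedPoint c) s)
      (nhdsWithin 0 (Set.Ioi 0)) (nhds 0) ∧
    Filter.Tendsto
      (fun s => β * (-Real.log (1-c)) + (c + s^2 * deriv (mpFixedPoint c) s))
      (nhdsWithin 0 (Set.Ioi 0)) (nhds (-β * Real.log (1-c) + c)) ∧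
    Filter.Tendsto
      (fun s => β * (-Real.log (1-c)) + (c + s^2 * deriv (mpFixedPoint c) s) +
        (-(deriv (mpFixedPoint c) s)) / (1 + mpFixedPoint c s)^4)
      (nhdsWithin 0 (Set.Ioi 0)) (nhds (-β * Real.log (1-c) + c*(2-c))) := by
  set l := nhdsWithin (0:ℝ) (Set.Ioi 0) with hl
  have hle : l ≤ nhds 0 := nhdsWithin_le_nhds
  have h1c : (0:ℝ) < 1 - c := by linarith
  -- sqrt tendsto
  have hqc : Tendsto (fun s : ℝ => Real.sqrt ((1 - c + s)^2 + 4*c*s)) l (nhds (1 - c)) := by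
    have hcont : ContinuousAt (fun s : ℝ => Real.sqrt ((1 - c + s)^2 + 4*c*s)) 0 := by
      fun_prop
    have h := hcont.tendsto.mono_left hle
    norm_num at h
    rwa [Real.sqrt_sq h1c.le] at h
  have hmem : ∀ᶠ s in l, s ∈ Set.Ioi (0:ℝ) := self_mem_nhdsWithin
  -- δ tendsto
  have hδ : Tendsto (mpFixedPoint c) l (nhds (c/(1-c))) := by
    have halt : Tendsto (fun s : ℝ => 2*c / (Real.sqrt ((1 - c + s)^2 + 4*c*s) + (1 - c + s))) l
        (nhds (2*c / ((1-c) + (1-c)))) := by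
      have hA : Tendsto (fun s : ℝ => (1 - c + s)) l (nhds (1 - c)) := by
        have : ContinuousAt (fun s : ℝ => 1 - c + s) 0 := by fun_prop
        have := this.tendsto.mono_left hle
        simpa using this
      exact tendsto_const_nhds.div (hqc.add hA) (by positivity)
    have heq : ∀ᶠ s in l, 2*c / (Real.sqrt ((1 - c + s)^2 + 4*c*s) + (1 - c + s)) =
        mpFixedPoint c s := by
      filter_upwards [hmem] with s hs
      exact (mp_alt c hc0 hc1 hs).symm
    have := halt.congr' heq
    have hval : 2*c / ((1-c) + (1-c)) = c/(1-c) := by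
      field_simp
      ring
    rwa [hval] at this
  -- deriv formula eventually
  have hderiv : ∀ᶠ s in l, deriv (mpFixedPoint c) s =
      -(mpFixedPoint c s^2 + mpFixedPoint c s) / Real.sqrt ((1 - c + s)^2 + 4*c*s) := by
    filter_upwards [hmem] with s hs
    exact (mp_hasDeriv c hc0 hc1 hs).deriv
  -- T1 : tendsto of -(δ²+δ)/q
  have hT1 : Tendsto (fun s => -(mpFixedPoint c s^2 + mpFixedPoint c s) /
      Real.sqrt ((1 - c + s)^2 + 4*c*s)) l
      (nhds (-((c/(1-c))^2 + c/(1-c)) / (1-c))) := by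
    exact (((hδ.pow 2).add hδ).neg).div hqc (by positivity)
  have hderivT : Tendsto (fun s => deriv (mpFixedPoint c) s) l
      (nhds (-((c/(1-c))^2 + c/(1-c)) / (1-c))) :=
    hT1.congr' (hderiv.mono fun s h => h.symm)
  -- part 2
  have hs2 : Tendsto (fun s : ℝ => s^2) l (nhds 0) := by
    have : ContinuousAt (fun s : ℝ => s^2) 0 := by fun_prop
    have := this.tendsto.mono_left hle
    simpa using this
  have part2 : Tendsto (fun s => s^2 * deriv (mpFixedPoint c) s) l (nhds 0) := by
    simpa using hs2.mul hderivT
  -- part 3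
  have part3 : Tendsto
      (fun s => β * (-Real.log (1-c)) + (c + s^2 * deriv (mpFixedPoint c) s)) l
      (nhds (-β * Real.log (1-c) + c)) := by
    have := (part2.const_add c).const_add (β * (-Real.log (1-c)))
    have hval : β * (-Real.log (1-c)) + (c + 0) = -β * Real.log (1-c) + c := by ring
    rwa [hval] at this
  -- part 4
  have h1δ : Tendsto (fun s => (1 + mpFixedPoint c s)^4) l (nhds ((1 + c/(1-c))^4)) :=
    (hδ.const_add 1).pow 4
  have h1δne : (1 + c/(1-c))^4 ≠ 0 := by positivity
  have hlast : Tendsto (fun s => (-(deriv (mpFixedPoint c) s)) / (1 + mpFixedPoint c s)^4) l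
      (nhds (c*(1-c))) := by
    have := (hderivT.neg).div h1δ h1δne
    have hval : -(-((c/(1-c))^2 + c/(1-c)) / (1-c)) / (1 + c/(1-c))^4 = c*(1-c) := by
      rw [show (1 + c/(1-c)) = 1/(1-c) by field_simp; ring]
      field_simp
      ring
    rwa [hval] at this
  have part4 : Tendsto
      (fun s => β * (-Real.log (1-c)) + (c + s^2 * deriv (mpFixedPoint c) s) +
        (-(deriv (mpFixedPoint c) s)) / (1 + mpFixedPoint c s)^4) l
      (nhds (-β * Real.log (1-c) + c*(2-c))) := by
    have := part3.add hlast
    have hval : -β * Real.log (1-c) + c + c*(1-c) = -β * Real.log (1-c) + c*(2-c) := by ring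
    rwa [hval] at this
  exact ⟨hδ, part2, part3, part4⟩
end
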